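/- arXiv:1108.4859 — 5 statements merged into one kernel-verified Lean document; each statement's English description precedes it below -/
import Mathlib

section
/- For all μ > 0 and a, θ, v ∈ ℝ, the energy of the soliton profile is H(η(·; μ, a, θ, v)) = (1/2) μ^{-1} v² - (1/6) μ³. -/
/-!
Write `η = e^{iφ} A` with real phase `φ(x) = θ + μ⁻¹v(x - a)` and amplitude
`A(x) = μ sech(μ(x - a))`. Then `|η'|² = A'² + φ'² A²` and `|η| = A`, and by
`tanh² = 1 - sech²` both energy densities are combinations of `sech²` and `sech⁴` evaluated at
`μ(x - a)`. The substitution `y = μ(x - a)` contributes the factor `μ⁻¹`, and `∫ sech² = 2`,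
`∫ sech⁴ = 4/3` follow from the antiderivatives `tanh` and `tanh - tanh³/3`.
-/

open Real MeasureTheory

/-- The soliton profile `η(x; μ, a, θ, v) = e^{iθ} e^{iμ⁻¹v(x-a)} μ sech(μ(x-a))`. -/
noncomputable def soliton (μ a θ v x : ℝ) : ℂ :=
  Complex.exp (Complex.I * (θ : ℂ)) * Complex.exp (Complex.I * (((v / μ) * (x - a) : ℝ) : ℂ)) *
    (μ : ℂ) * ((1 / Real.cosh (μ * (x - a)) : ℝ) : ℂ)

open Filter

namespace Real

theorem hasDerivAt_tanh (x : ℝ) : HasDerivAt tanh ((1 / cosh x) ^ 2) x := by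
  have hc := (cosh_pos x).ne'
  have h := (hasDerivAt_sinh x).div (hasDerivAt_cosh x) hc
  rw [show tanh = fun y => sinh y / cosh y from funext tanh_eq_sinh_div_cosh]
  refine h.congr_deriv ?_
  field_simp
  linear_combination cosh_sq_sub_sinh_sq x

theorem hasDerivAt_one_div_cosh (x : ℝ) :
    HasDerivAt (fun y => 1 / cosh y) (-(tanh x * (1 / cosh x))) x := by
  have hc := (cosh_pos x).ne'
  simp only [one_div]
  refine ((hasDerivAt_cosh x).inv hc).congr_deriv ?_
  rw [tanh_eq_sinh_div_cosh]
  field_simp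

theorem tanh_sq (x : ℝ) : tanh x ^ 2 = 1 - (1 / cosh x) ^ 2 := by
  have hc := (cosh_pos x).ne'
  rw [tanh_eq_sinh_div_cosh]
  field_simp
  linear_combination -cosh_sq_sub_sinh_sq x

theorem tanh_eq_one_sub (x : ℝ) : tanh x = 1 - 2 / (exp (2 * x) + 1) := by
  have h : exp (2 * x) = exp x * exp x := by rw [← exp_add]; ring_nf
  rw [tanh_eq_sinh_div_cosh, sinh_eq, cosh_eq, exp_neg, h]
  have := exp_pos x
  field_simp
  ring

theorem tendsto_tanh_atTop : Tendsto tanh atTop (nhds 1) := by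
  rw [funext tanh_eq_one_sub]
  have h : Tendsto (fun x : ℝ => exp (2 * x) + 1) atTop atTop :=
    (tendsto_exp_atTop.comp (tendsto_id.const_mul_atTop two_pos)).atTop_add tendsto_const_nhds
  simpa using tendsto_const_nhds.sub (h.const_div_atTop 2)

theorem tendsto_tanh_atBot : Tendsto tanh atBot (nhds (-1)) := by
  have := (tendsto_tanh_atTop.comp tendsto_neg_atBot_atTop).neg
  simpa [Function.comp_def, tanh_neg] using this

theorem one_add_sq_le_four_mul_cosh (x : ℝ) : 1 + x ^ 2 ≤ 4 * cosh x := by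
  rw [← cosh_abs, cosh_eq]
  have h₁ := quadratic_le_exp_of_nonneg (abs_nonneg x)
  have h₂ := add_one_le_exp (-|x|)
  nlinarith [sq_abs x]

theorem integrable_one_div_cosh_pow {n : ℕ} (hn : n ≠ 0) :
    Integrable fun x => (1 / cosh x) ^ n := by
  have hmeas : Measurable fun x => (1 / cosh x) ^ n := by fun_prop
  refine (integrable_inv_one_add_sq.const_mul 4).mono' hmeas.aestronglyMeasurable
    (ae_of_all _ fun x => ?_)
  have hc := cosh_pos x
  have hsech : 1 / cosh x ≤ 1 := (div_le_one hc).2 (one_le_cosh x)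
  rw [norm_of_nonneg (by positivity)]
  calc (1 / cosh x) ^ n ≤ 1 / cosh x := pow_le_of_le_one (by positivity) hsech hn
    _ ≤ 4 * (1 + x ^ 2)⁻¹ := by
      rw [← div_eq_mul_inv, div_le_div_iff₀ hc (by positivity)]
      linarith [one_add_sq_le_four_mul_cosh x]

theorem integral_one_div_cosh_sq : ∫ x, (1 / cosh x) ^ 2 = 2 := by
  rw [integral_of_hasDerivAt_of_tendsto hasDerivAt_tanh (integrable_one_div_cosh_pow two_ne_zero)
    tendsto_tanh_atBot tendsto_tanh_atTop]
  norm_num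

theorem integral_one_div_cosh_pow_four : ∫ x, (1 / cosh x) ^ 4 = 4 / 3 := by
  let F x := tanh x - tanh x ^ 3 / 3
  have hF (x : ℝ) : HasDerivAt F ((1 / cosh x) ^ 4) x := by
    refine ((hasDerivAt_tanh x).sub (((hasDerivAt_tanh x).pow 3).div_const 3)).congr_deriv ?_
    linear_combination (-(1 / cosh x) ^ 2) * tanh_sq x
  have hbot : Tendsto F atBot (nhds (-1 - (-1) ^ 3 / 3)) :=
    tendsto_tanh_atBot.sub ((tendsto_tanh_atBot.pow 3).div_const 3)
  have htop : Tendsto F atTop (nhds (1 - 1 ^ 3 / 3)) :=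
    tendsto_tanh_atTop.sub ((tendsto_tanh_atTop.pow 3).div_const 3)
  rw [integral_of_hasDerivAt_of_tendsto hF (integrable_one_div_cosh_pow four_ne_zero) hbot htop]
  norm_num

end Real

theorem integral_comp_mul_sub {E : Type*} [NormedAddCommGroup E] [NormedSpace ℝ E]
    (f : ℝ → E) (c a : ℝ) : ∫ x, f (c * (x - a)) = |c⁻¹| • ∫ y, f y := by
  rw [integral_sub_right_eq_self (fun x => f (c * x)) a, Measure.integral_comp_mul_left]


open Complex in
theorem HasDerivAt.cexp_ofReal_mul_I_mul_ofReal {φ A : ℝ → ℝ} {φ' A' x : ℝ}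
    (hφ : HasDerivAt φ φ' x) (hA : HasDerivAt A A' x) :
    HasDerivAt (fun y => Complex.exp ((φ y : ℂ) * I) * (A y : ℂ))
      (Complex.exp ((φ x : ℂ) * I) * ((A' : ℂ) + (φ' : ℂ) * (A x : ℂ) * I)) x := by
  have hphase := (hφ.ofReal_comp.mul_const I).cexp
  refine (hphase.mul hA.ofReal_comp).congr_deriv ?_
  ring

open Complex in
theorem norm_exp_ofReal_mul_I_mul_sq (t a b : ℝ) :
    ‖exp ((t : ℂ) * I) * ((a : ℂ) + (b : ℂ) * I)‖ ^ 2 = a ^ 2 + b ^ 2 := by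
  rw [norm_mul, norm_exp_ofReal_mul_I, one_mul, Complex.sq_norm, normSq_add_mul_I]

section Soliton

variable {μ : ℝ} (a θ v : ℝ)

theorem soliton_eq_exp_mul :
    soliton μ a θ v = fun x => Complex.exp (↑(θ + v / μ * (x - a)) * Complex.I) *
      ↑(μ * (1 / cosh (μ * (x - a)))) := by
  funext x
  rw [soliton, ← Complex.exp_add]
  push_cast
  ring_nf

theorem hasDerivAt_soliton (hμ : μ ≠ 0) (x : ℝ) :
    HasDerivAt (soliton μ a θ v)
      (Complex.exp (((θ + v / μ * (x - a) : ℝ) : ℂ) * Complex.I) *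
        (((-(μ ^ 2 * tanh (μ * (x - a)) * (1 / cosh (μ * (x - a)))) : ℝ) : ℂ) +
          ((v * (1 / cosh (μ * (x - a))) : ℝ) : ℂ) * Complex.I)) x := by
  have hu : HasDerivAt (fun y => μ * (y - a)) μ x := by
    simpa using ((hasDerivAt_id x).sub_const a).const_mul μ
  have hphase : HasDerivAt (fun y => θ + v / μ * (y - a)) (v / μ) x := by
    simpa using (((hasDerivAt_id x).sub_const a).const_mul (v / μ)).const_add θ
  have hamp : HasDerivAt (fun y => μ * (1 / cosh (μ * (y - a))))
      (-(μ ^ 2 * tanh (μ * (x - a)) * (1 / cosh (μ * (x - a))))) x :=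
    (((hasDerivAt_one_div_cosh _).comp x hu).const_mul μ).congr_deriv (by ring)
  rw [soliton_eq_exp_mul]
  convert hphase.cexp_ofReal_mul_I_mul_ofReal hamp using 4
  rw [← Complex.ofReal_mul, div_mul_eq_mul_div, mul_left_comm, mul_div_cancel_left₀ _ hμ]

theorem norm_deriv_soliton_sq (hμ : μ ≠ 0) (x : ℝ) :
    ‖deriv (soliton μ a θ v) x‖ ^ 2 =
      (v ^ 2 + μ ^ 4) * (1 / cosh (μ * (x - a))) ^ 2
        - μ ^ 4 * (1 / cosh (μ * (x - a))) ^ 4 := by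
  rw [(hasDerivAt_soliton a θ v hμ x).deriv, norm_exp_ofReal_mul_I_mul_sq]
  linear_combination μ ^ 4 * (1 / cosh (μ * (x - a))) ^ 2 * tanh_sq (μ * (x - a))

theorem norm_soliton_pow_four (x : ℝ) :
    ‖soliton μ a θ v x‖ ^ 4 = μ ^ 4 * (1 / cosh (μ * (x - a))) ^ 4 := by
  rw [soliton_eq_exp_mul, norm_mul, Complex.norm_exp_ofReal_mul_I, one_mul, Complex.norm_real,
    Real.norm_eq_abs, pow_abs, abs_of_nonneg (by positivity), mul_pow]

theorem integral_norm_deriv_soliton_sq (hμ : 0 < μ) :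
    ∫ x, ‖deriv (soliton μ a θ v) x‖ ^ 2 = μ⁻¹ * (2 * v ^ 2 + 2 / 3 * μ ^ 4) := by
  simp_rw [norm_deriv_soliton_sq a θ v hμ.ne']
  rw [integral_comp_mul_sub
      fun y => (v ^ 2 + μ ^ 4) * (1 / cosh y) ^ 2 - μ ^ 4 * (1 / cosh y) ^ 4,
    integral_sub ((integrable_one_div_cosh_pow two_ne_zero).const_mul _)
      ((integrable_one_div_cosh_pow four_ne_zero).const_mul _),
    integral_const_mul, integral_const_mul, integral_one_div_cosh_sq,
    integral_one_div_cosh_pow_four, abs_of_pos (inv_pos.2 hμ), smul_eq_mul]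
  ring

theorem integral_norm_soliton_pow_four (hμ : 0 < μ) :
    ∫ x, ‖soliton μ a θ v x‖ ^ 4 = 4 / 3 * μ ^ 3 := by
  simp_rw [norm_soliton_pow_four]
  rw [integral_comp_mul_sub (fun y => μ ^ 4 * (1 / cosh y) ^ 4), integral_const_mul,
    integral_one_div_cosh_pow_four, abs_of_pos (inv_pos.2 hμ), smul_eq_mul]
  field_simp

end Soliton

/-- The energy of the soliton profile:
`H(η(·; μ, a, θ, v)) = (1/4)∫|η'|² - (1/4)∫|η|⁴ = (1/2)μ⁻¹v² - (1/6)μ³`. -/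
theorem soliton_energy (μ a θ v : ℝ) (hμ : 0 < μ) :
    (1 / 4) * (∫ x : ℝ, ‖deriv (soliton μ a θ v) x‖ ^ 2)
      - (1 / 4) * (∫ x : ℝ, ‖soliton μ a θ v x‖ ^ 4)
      = (1 / 2) * μ⁻¹ * v ^ 2 - (1 / 6) * μ ^ 3 := by
  rw [integral_norm_deriv_soliton_sq a θ v hμ, integral_norm_soliton_pow_four a θ v hμ]
  field_simp
  ring
end

section
/- Let φ(x) = sech x and let S be the real-linear operator S ρ = (1/2)ρ - (1/2)ρ'' - 2φ²ρ - φ² conj(ρ). Then the kernel of S acting on H²(ℝ, ℂ) is exactly the real span of φ' and iφ; that is, ρ ∈ H²(ℝ, ℂ) satisfies Sρ = 0 if and only if ρ = c₁ φ' + c₂ i φ for some real numbers c₁, c₂. -/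
/-!
Writing `ρ = u + i v`, the equation `Sρ = 0` splits into `u'' = (1 - 6φ²) u` and
`v'' = (1 - 2φ²) v`, which are solved by `φ'` and `φ` respectively. The Wronskian of two
solutions of `f'' = q f` is constant, and for solutions in `H¹` it is integrable, hence zero.
So at `0` the data `(u, u')` is proportional to `(φ', φ'')` and `(v, v')` to `(φ, φ')`, and
uniqueness for the linear equation with bounded coefficient propagates the proportionality to
all of `ℝ`.
-/

open Real MeasureTheory

/-- The ground-state profile `φ(x) = sech x`, as a complex-valued function. -/
noncomputable def phiC (x : ℝ) : ℂ := ((1 / Real.cosh x : ℝ) : ℂ)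

/-- The real-linear linearized operator `Sρ = (1/2)ρ - (1/2)ρ″ - 2φ²ρ - φ² conj(ρ)`. -/
noncomputable def Sop (ρ : ℝ → ℂ) (x : ℝ) : ℂ :=
  (1 / 2) * ρ x - (1 / 2) * deriv (deriv ρ) x
    - 2 * (phiC x) ^ 2 * ρ x - (phiC x) ^ 2 * (starRingEnd ℂ) (ρ x)

lemma lipschitzWith_prodMk_snd_mul_fst {q : ℝ → ℝ} {C : ℝ} (hq : ∀ x, |q x| ≤ C)
    (t : ℝ) :
    LipschitzWith (max 1 C).toNNReal (fun p : ℝ × ℝ => (p.2, q t * p.1)) := by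
  refine LipschitzWith.of_dist_le_mul fun p p' => ?_
  rw [Real.coe_toNNReal _ (le_max_of_le_left zero_le_one)]
  simp only [Prod.dist_eq, Real.dist_eq]
  have hK : 1 ≤ max 1 C := le_max_left _ _
  refine max_le ?_ ?_
  · calc |p.2 - p'.2| ≤ max |p.1 - p'.1| |p.2 - p'.2| := le_max_right _ _
      _ ≤ max 1 C * max |p.1 - p'.1| |p.2 - p'.2| := le_mul_of_one_le_left (by positivity) hK
  · calc |q t * p.1 - q t * p'.1| = |q t| * |p.1 - p'.1| := by rw [← mul_sub, abs_mul]
      _ ≤ max 1 C * max |p.1 - p'.1| |p.2 - p'.2| :=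
        mul_le_mul ((hq t).trans (le_max_right _ _)) (le_max_left _ _) (abs_nonneg _)
          (by positivity)

def SolvesSecondOrder (q f f' : ℝ → ℝ) : Prop :=
  ∀ x, HasDerivAt f (f' x) x ∧ HasDerivAt f' (q x * f x) x

namespace SolvesSecondOrder

variable {q f f' g g' : ℝ → ℝ}

lemma const_mul (h : SolvesSecondOrder q f f') (c : ℝ) :
    SolvesSecondOrder q (fun x => c * f x) (fun x => c * f' x) := fun x =>
  ⟨(h x).1.const_mul c, ((h x).2.const_mul c).congr_deriv (by ring)⟩

theorem eq_of_initial_eq {C : ℝ} (hq : ∀ x, |q x| ≤ C) (hf : SolvesSecondOrder q f f')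
    (hg : SolvesSecondOrder q g g') {x₀ : ℝ} (h₀ : f x₀ = g x₀)
    (h₀' : f' x₀ = g' x₀) : f = g := by
  have key := ODE_solution_unique_univ (v := fun t (p : ℝ × ℝ) => (p.2, q t * p.1))
    (s := fun _ => Set.univ) (fun t => (lipschitzWith_prodMk_snd_mul_fst hq t).lipschitzOnWith)
    (f := fun x => (f x, f' x)) (g := fun x => (g x, g' x)) (t₀ := x₀)
    (fun x => ⟨(hf x).1.prodMk (hf x).2, trivial⟩)
    (fun x => ⟨(hg x).1.prodMk (hg x).2, trivial⟩)
    (Prod.ext h₀ h₀')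
  funext x
  exact congrArg Prod.fst (congrFun key x)

lemma hasDerivAt_wronskian (hf : SolvesSecondOrder q f f') (hg : SolvesSecondOrder q g g')
    (x : ℝ) : HasDerivAt (fun x => f x * g' x - f' x * g x) 0 x :=
  (((hf x).1.mul (hg x).2).sub ((hf x).2.mul (hg x).1)).congr_deriv (by ring)

theorem wronskian_eq_zero_of_memLp (hf : SolvesSecondOrder q f f') (hg : SolvesSecondOrder q g g')
    (hfL : MemLp f 2 volume) (hf'L : MemLp f' 2 volume) (hgL : MemLp g 2 volume)
    (hg'L : MemLp g' 2 volume) (x : ℝ) : f x * g' x - f' x * g x = 0 := by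
  set W := fun x => f x * g' x - f' x * g x
  have hW : ∀ y, W y = W x := fun y =>
    is_const_of_deriv_eq_zero (fun z => (hasDerivAt_wronskian hf hg z).differentiableAt)
      (fun z => (hasDerivAt_wronskian hf hg z).deriv) y x
  have hint : Integrable (fun _ : ℝ => W x) volume := by
    refine ((hfL.integrable_mul hg'L).sub (hf'L.integrable_mul hgL)).congr ?_
    exact Filter.Eventually.of_forall fun y => hW y
  exact (integrable_const_iff.mp hint).resolve_right fun h => by
    simpa using h.measure_univ_lt_top

theorem exists_eq_const_mul_of_wronskian_eq_zero {C : ℝ} (hq : ∀ x, |q x| ≤ C)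
    (hf : SolvesSecondOrder q f f') (hg : SolvesSecondOrder q g g') {x₀ : ℝ}
    (hW : f x₀ * g' x₀ - f' x₀ * g x₀ = 0) (hg₀ : g x₀ ≠ 0 ∨ g' x₀ ≠ 0) :
    ∃ c : ℝ, ∀ x, f x = c * g x := by
  obtain ⟨c, h₀, h₀'⟩ : ∃ c, f x₀ = c * g x₀ ∧ f' x₀ = c * g' x₀ := by
    rcases hg₀ with hg₀ | hg₀
    · exact ⟨f x₀ / g x₀, by field_simp, by field_simp; linarith⟩
    · exact ⟨f' x₀ / g' x₀, by field_simp; linarith, by field_simp⟩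
  exact ⟨c, congrFun (eq_of_initial_eq hq hf (hg.const_mul c) h₀ h₀')⟩

theorem exists_eq_const_mul_of_memLp {C : ℝ} (hq : ∀ x, |q x| ≤ C)
    (hf : SolvesSecondOrder q f f') (hg : SolvesSecondOrder q g g')
    (hfL : MemLp f 2 volume) (hf'L : MemLp f' 2 volume) (hgL : MemLp g 2 volume)
    (hg'L : MemLp g' 2 volume) {x₀ : ℝ} (hg₀ : g x₀ ≠ 0 ∨ g' x₀ ≠ 0) :
    ∃ c : ℝ, ∀ x, f x = c * g x :=
  exists_eq_const_mul_of_wronskian_eq_zero hq hf hg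
    (wronskian_eq_zero_of_memLp hf hg hfL hf'L hgL hg'L x₀) hg₀

end SolvesSecondOrder

noncomputable def phiR (x : ℝ) : ℝ := 1 / cosh x

noncomputable def phiR' (x : ℝ) : ℝ := -sinh x / cosh x ^ 2

noncomputable def phiR'' (x : ℝ) : ℝ := (1 - 2 * phiR x ^ 2) * phiR x

lemma phiC_eq : phiC = fun x => (phiR x : ℂ) := rfl

lemma hasDerivAt_phiR (x : ℝ) : HasDerivAt phiR (phiR' x) x := by
  have h := (hasDerivAt_cosh x).inv (cosh_pos x).ne'
  have hφ : phiR = fun y => (cosh y)⁻¹ := funext fun y => one_div _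
  rw [hφ]
  exact h.congr_deriv (by simp [phiR', neg_div])

lemma hasDerivAt_phiR' (x : ℝ) : HasDerivAt phiR' (phiR'' x) x := by
  have hc := (cosh_pos x).ne'
  refine ((hasDerivAt_sinh x).neg.div ((hasDerivAt_cosh x).pow 2) (pow_ne_zero 2 hc)).congr_deriv ?_
  have hs : sinh x ^ 2 = cosh x ^ 2 - 1 := by linarith [cosh_sq_sub_sinh_sq x]
  simp only [Pi.pow_apply, Pi.neg_apply, phiR'', phiR]
  field_simp
  norm_num
  linear_combination 2 * cosh x * hs

lemma hasDerivAt_phiR'' (x : ℝ) : HasDerivAt phiR'' ((1 - 6 * phiR x ^ 2) * phiR' x) x := by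
  have hφ : phiR'' = fun y => phiR y - 2 * phiR y ^ 3 := funext fun y => by rw [phiR'']; ring
  rw [hφ]
  exact ((hasDerivAt_phiR x).sub (((hasDerivAt_phiR x).pow 3).const_mul 2)).congr_deriv
    (by push_cast; ring)

lemma phiR_pos (x : ℝ) : 0 < phiR x := by
  unfold phiR; positivity

lemma phiR_le_one (x : ℝ) : phiR x ≤ 1 := by
  rw [phiR, div_le_one (cosh_pos x)]
  exact one_le_cosh x

lemma phiR_zero : phiR 0 = 1 := by simp [phiR]

lemma phiR''_zero : phiR'' 0 = -1 := by norm_num [phiR'', phiR_zero]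

lemma abs_phiR'_le (x : ℝ) : |phiR' x| ≤ phiR x := by
  have hc := cosh_pos x
  have hs : |sinh x| ≤ cosh x := by
    rw [← sq_le_sq₀ (abs_nonneg _) hc.le, sq_abs]
    linarith [cosh_sq_sub_sinh_sq x]
  rw [phiR', phiR, abs_div, abs_neg, abs_of_pos (by positivity : 0 < cosh x ^ 2),
    div_le_div_iff₀ (by positivity) hc]
  nlinarith

lemma abs_phiR''_le (x : ℝ) : |phiR'' x| ≤ phiR x := by
  have h0 := phiR_pos x
  have h1 := phiR_le_one x
  rw [phiR'', abs_mul, abs_of_pos h0]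
  refine mul_le_of_le_one_left h0.le (abs_le.mpr ⟨?_, ?_⟩) <;> nlinarith

lemma abs_one_sub_mul_phiR_sq_le {k : ℝ} (hk : 0 ≤ k) (x : ℝ) :
    |1 - k * phiR x ^ 2| ≤ 1 + k := by
  have h0 := phiR_pos x
  have h1 := phiR_le_one x
  have hsq : k * phiR x ^ 2 ≤ k := mul_le_of_le_one_right hk (pow_le_one₀ h0.le h1)
  refine abs_le.mpr ⟨?_, ?_⟩ <;> nlinarith

lemma phiR_le_inv_one_add_sq (x : ℝ) : phiR x ≤ 4 * (1 + x ^ 2)⁻¹ := by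
  have hexp : 1 + |x| + x ^ 2 / 2 ≤ exp |x| := by
    simpa [sq_abs] using quadratic_le_exp_of_nonneg (abs_nonneg x)
  have hcosh : (1 + x ^ 2) / 4 ≤ cosh x := by
    rw [← cosh_abs, cosh_eq]
    nlinarith [abs_nonneg x, exp_pos (-|x|)]
  rw [phiR, one_div, ← div_eq_mul_inv, le_div_iff₀ (by positivity),
    inv_mul_le_iff₀ (cosh_pos x)]
  linarith

lemma memLp_phiR : MemLp phiR 2 volume := by
  have hcont : Continuous phiR := continuous_const.div continuous_cosh fun x => (cosh_pos x).ne'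
  refine (memLp_two_iff_integrable_sq hcont.aestronglyMeasurable).mpr ?_
  refine (integrable_inv_one_add_sq.const_mul 4).mono' (hcont.pow 2).aestronglyMeasurable
    (Filter.Eventually.of_forall fun x => ?_)
  have h0 := phiR_pos x
  rw [Real.norm_eq_abs, abs_of_pos (by positivity)]
  nlinarith [phiR_le_one x, phiR_le_inv_one_add_sq x]

lemma memLp_of_abs_le_phiR {g : ℝ → ℝ} (hg : Continuous g) (h : ∀ x, |g x| ≤ phiR x) :
    MemLp g 2 volume :=
  memLp_phiR.of_le hg.aestronglyMeasurable <| Filter.Eventually.of_forall fun x => by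
    simpa [abs_of_pos (phiR_pos x)] using h x

lemma memLp_phiR' : MemLp phiR' 2 volume :=
  memLp_of_abs_le_phiR (continuous_iff_continuousAt.mpr fun x => (hasDerivAt_phiR' x).continuousAt)
    abs_phiR'_le

lemma memLp_phiR'' : MemLp phiR'' 2 volume :=
  memLp_of_abs_le_phiR
    (continuous_iff_continuousAt.mpr fun x => (hasDerivAt_phiR'' x).continuousAt) abs_phiR''_le

lemma solvesSecondOrder_phiR : SolvesSecondOrder (fun x => 1 - 2 * phiR x ^ 2) phiR phiR' :=
  fun x => ⟨hasDerivAt_phiR x, hasDerivAt_phiR' x⟩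

lemma solvesSecondOrder_phiR' : SolvesSecondOrder (fun x => 1 - 6 * phiR x ^ 2) phiR' phiR'' :=
  fun x => ⟨hasDerivAt_phiR' x, hasDerivAt_phiR'' x⟩

lemma deriv_phiC (x : ℝ) : deriv phiC x = phiR' x :=
  (hasDerivAt_phiR x).ofReal_comp.deriv

lemma Sop_eq_zero_iff (ρ : ℝ → ℂ) (x : ℝ) :
    Sop ρ x = 0 ↔ (deriv (deriv ρ) x).re = (1 - 6 * phiR x ^ 2) * (ρ x).re ∧
      (deriv (deriv ρ) x).im = (1 - 2 * phiR x ^ 2) * (ρ x).im := by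
  rw [Complex.ext_iff]
  simp only [Sop, phiC_eq, ← Complex.ofReal_pow, Complex.sub_re, Complex.sub_im, Complex.mul_re,
    Complex.mul_im, Complex.ofReal_re, Complex.ofReal_im, Complex.conj_re, Complex.conj_im,
    Complex.zero_re, Complex.zero_im]
  norm_num
  constructor <;> rintro ⟨h₁, h₂⟩ <;> constructor <;> linarith

lemma hasDerivAt_ofReal_add_ofReal_mul_I {u v : ℝ → ℝ} {u' v' x : ℝ}
    (hu : HasDerivAt u u' x) (hv : HasDerivAt v v' x) :
    HasDerivAt (fun y => (u y : ℂ) + v y * Complex.I) (u' + v' * Complex.I) x :=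
  hu.ofReal_comp.add (hv.ofReal_comp.mul_const _)

lemma Sop_mul_deriv_phiC_add_mul_I_mul_phiC (c₁ c₂ : ℝ) (x : ℝ) :
    Sop (fun x => (c₁ : ℂ) * deriv phiC x + (c₂ : ℂ) * Complex.I * phiC x) x = 0 := by
  have hρ : (fun x => (c₁ : ℂ) * deriv phiC x + (c₂ : ℂ) * Complex.I * phiC x) =
      fun x => ((c₁ * phiR' x : ℝ) : ℂ) + (c₂ * phiR x : ℝ) * Complex.I := by
    funext x; rw [deriv_phiC, phiC_eq]; push_cast; ring
  have hρ' : ∀ x, HasDerivAt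
      (fun x => ((c₁ * phiR' x : ℝ) : ℂ) + (c₂ * phiR x : ℝ) * Complex.I)
      ((c₁ * phiR'' x : ℝ) + (c₂ * phiR' x : ℝ) * Complex.I) x := fun x =>
    hasDerivAt_ofReal_add_ofReal_mul_I ((hasDerivAt_phiR' x).const_mul c₁)
      ((hasDerivAt_phiR x).const_mul c₂)
  have hρ'' : HasDerivAt
      (fun x => ((c₁ * phiR'' x : ℝ) : ℂ) + (c₂ * phiR' x : ℝ) * Complex.I)
      ((c₁ * ((1 - 6 * phiR x ^ 2) * phiR' x) : ℝ) + (c₂ * phiR'' x : ℝ) * Complex.I) x :=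
    hasDerivAt_ofReal_add_ofReal_mul_I ((hasDerivAt_phiR'' x).const_mul c₁)
      ((hasDerivAt_phiR' x).const_mul c₂)
  rw [hρ, Sop_eq_zero_iff, funext fun x => (hρ' x).deriv, hρ''.deriv]
  simp only [Complex.add_re, Complex.add_im, Complex.mul_re, Complex.mul_im, Complex.ofReal_re,
    Complex.ofReal_im, Complex.I_re, Complex.I_im, phiR'']
  constructor <;> ring

lemma solvesSecondOrder_re {q : ℝ → ℝ} {ρ : ℝ → ℂ} (h₁ : Differentiable ℝ ρ)
    (h₂ : Differentiable ℝ (deriv ρ)) (h : ∀ x, (deriv (deriv ρ) x).re = q x * (ρ x).re) :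
    SolvesSecondOrder q (fun x => (ρ x).re) (fun x => (deriv ρ x).re) := fun x =>
  ⟨Complex.reCLM.hasFDerivAt.comp_hasDerivAt x (h₁ x).hasDerivAt,
    h x ▸ Complex.reCLM.hasFDerivAt.comp_hasDerivAt x (h₂ x).hasDerivAt⟩

lemma solvesSecondOrder_im {q : ℝ → ℝ} {ρ : ℝ → ℂ} (h₁ : Differentiable ℝ ρ)
    (h₂ : Differentiable ℝ (deriv ρ)) (h : ∀ x, (deriv (deriv ρ) x).im = q x * (ρ x).im) :
    SolvesSecondOrder q (fun x => (ρ x).im) (fun x => (deriv ρ x).im) := fun x =>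
  ⟨Complex.imCLM.hasFDerivAt.comp_hasDerivAt x (h₁ x).hasDerivAt,
    h x ▸ Complex.imCLM.hasFDerivAt.comp_hasDerivAt x (h₂ x).hasDerivAt⟩

theorem kernel_of_S_general (ρ : ℝ → ℂ)
    (hρ1 : Differentiable ℝ ρ) (hρ2 : Differentiable ℝ (deriv ρ))
    (hL2 : MemLp ρ 2 volume) (hL2' : MemLp (deriv ρ) 2 volume) :
    (∀ x : ℝ, Sop ρ x = 0) ↔
      ∃ c₁ c₂ : ℝ, ∀ x : ℝ, ρ x = (c₁ : ℂ) * deriv phiC x + (c₂ : ℂ) * Complex.I * phiC x := by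
  constructor
  · intro hS
    have hode := fun x => (Sop_eq_zero_iff ρ x).mp (hS x)
    obtain ⟨c₁, hu⟩ := SolvesSecondOrder.exists_eq_const_mul_of_memLp
      (abs_one_sub_mul_phiR_sq_le (by norm_num : (0 : ℝ) ≤ 6))
      (solvesSecondOrder_re hρ1 hρ2 fun x => (hode x).1) solvesSecondOrder_phiR'
      hL2.re hL2'.re memLp_phiR' memLp_phiR'' (x₀ := 0) (Or.inr (by norm_num [phiR''_zero]))
    obtain ⟨c₂, hv⟩ := SolvesSecondOrder.exists_eq_const_mul_of_memLp
      (abs_one_sub_mul_phiR_sq_le (by norm_num : (0 : ℝ) ≤ 2))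
      (solvesSecondOrder_im hρ1 hρ2 fun x => (hode x).2) solvesSecondOrder_phiR
      hL2.im hL2'.im memLp_phiR memLp_phiR' (x₀ := 0) (Or.inl (by norm_num [phiR_zero]))
    refine ⟨c₁, c₂, fun x => ?_⟩
    rw [← Complex.re_add_im (ρ x), hu x, hv x, deriv_phiC, phiC_eq]
    push_cast
    ring
  · rintro ⟨c₁, c₂, h⟩ x
    rw [funext h]
    exact Sop_mul_deriv_phiC_add_mul_I_mul_phiC c₁ c₂ x

/-- The kernel of `S` on `H²(ℝ,ℂ)` is exactly the real span of `φ'` and `iφ`. -/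
theorem kernel_of_S (ρ : ℝ → ℂ)
    (hρ1 : Differentiable ℝ ρ) (hρ2 : Differentiable ℝ (deriv ρ))
    (hL2 : MemLp ρ 2 volume) (hL2' : MemLp (deriv ρ) 2 volume)
    (hL2'' : MemLp (deriv (deriv ρ)) 2 volume) :
    (∀ x : ℝ, Sop ρ x = 0) ↔
      ∃ c₁ c₂ : ℝ, ∀ x : ℝ, ρ x = (c₁ : ℂ) * deriv phiC x + (c₂ : ℂ) * Complex.I * phiC x :=
  kernel_of_S_general ρ hρ1 hρ2 hL2 hL2'
end

section
/- Let φ(x) = sech x and let S be the real-linear operator S ρ = (1/2)ρ - (1/2)ρ'' - 2φ²ρ - φ² conj(ρ). Then S applied to the function x ↦ φ(x) + x φ'(x) equals -φ; that is, S(φ + xφ') = -φ pointwise on ℝ. (In the notation of the paper, S(∂_μ φ) = J^{-1} ∂_θ φ.) -/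
open Real MeasureTheory

/-!
On real functions `S` is the operator `L₊ = 1/2 - (1/2)∂² - 3φ²`. The profile satisfies
`φ'' = φ - 2φ³`, hence `φ''' = φ' - 6φ²φ'`, and with `ρ = φ + xφ'` we have `ρ'' = 3φ'' + xφ'''`.
Substituting these two relations into `L₊ρ`, every term except `-φ` cancels.
-/

noncomputable def sech (x : ℝ) : ℝ := 1 / cosh x

lemma phiC_eq_ofReal_sech : phiC = fun x => (sech x : ℂ) := rfl

lemma deriv_ofReal_comp (f : ℝ → ℝ) (x : ℝ) :
    deriv (fun y => (f y : ℂ)) x = ((deriv f x : ℝ) : ℂ) := by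
  by_cases hf : DifferentiableAt ℝ f x
  · exact hf.hasDerivAt.ofReal_comp.deriv
  · rw [deriv_zero_of_not_differentiableAt hf, deriv_zero_of_not_differentiableAt,
      Complex.ofReal_zero]
    intro hfC
    exact hf (by
      simpa [Function.comp_def] using Complex.differentiable_re.differentiableAt.comp x hfC)

lemma Sop_ofReal_comp (f : ℝ → ℝ) (x : ℝ) :
    Sop (fun y => (f y : ℂ)) x
      = ((1 / 2 * f x - 1 / 2 * deriv (deriv f) x - 3 * sech x ^ 2 * f x : ℝ) : ℂ) := by
  have hderiv : deriv (fun y => (f y : ℂ)) = fun y => ((deriv f y : ℝ) : ℂ) :=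
    funext (deriv_ofReal_comp f)
  rw [Sop, hderiv, deriv_ofReal_comp, phiC_eq_ofReal_sech, Complex.conj_ofReal]
  push_cast
  ring

lemma deriv_deriv_add_mul_deriv {f : ℝ → ℝ} (hf : Differentiable ℝ f)
    (hf' : Differentiable ℝ (deriv f)) {x : ℝ} (hf'' : DifferentiableAt ℝ (deriv (deriv f)) x) :
    deriv (deriv fun y => f y + y * deriv f y) x
      = 3 * deriv (deriv f) x + x * deriv (deriv (deriv f)) x := by
  have hfirst : deriv (fun y => f y + y * deriv f y)
      = fun y => 2 * deriv f y + y * deriv (deriv f) y := by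
    funext y
    refine ((hf y).hasDerivAt.add ((hasDerivAt_id y).mul (hf' y).hasDerivAt)).deriv.trans ?_
    simp only [id_eq]
    ring
  rw [hfirst]
  refine (((hf' x).hasDerivAt.const_mul 2).add
    ((hasDerivAt_id x).mul hf''.hasDerivAt)).deriv.trans ?_
  simp only [id_eq]
  ring

lemma hasDerivAt_sech (x : ℝ) : HasDerivAt sech (-(sinh x / cosh x ^ 2)) x := by
  refine ((hasDerivAt_const x (1 : ℝ)).div (hasDerivAt_cosh x) (cosh_pos x).ne').congr_deriv ?_
  ring

lemma deriv_sech : deriv sech = fun x => -(sinh x / cosh x ^ 2) :=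
  funext fun x => (hasDerivAt_sech x).deriv

lemma hasDerivAt_deriv_sech (x : ℝ) : HasDerivAt (deriv sech) (sech x - 2 * sech x ^ 3) x := by
  have hc : cosh x ≠ 0 := (cosh_pos x).ne'
  rw [deriv_sech]
  refine ((hasDerivAt_sinh x).div ((hasDerivAt_cosh x).pow 2)
    (pow_ne_zero 2 hc)).neg.congr_deriv ?_
  have hsinh_sq : sinh x ^ 2 = cosh x ^ 2 - 1 := by linarith [cosh_sq_sub_sinh_sq x]
  simp only [sech, Pi.pow_apply, Nat.cast_ofNat]
  field_simp
  rw [hsinh_sq]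
  ring

lemma deriv_deriv_sech : deriv (deriv sech) = fun x => sech x - 2 * sech x ^ 3 :=
  funext fun x => (hasDerivAt_deriv_sech x).deriv

lemma hasDerivAt_deriv_deriv_sech (x : ℝ) :
    HasDerivAt (deriv (deriv sech)) (deriv sech x - 6 * sech x ^ 2 * deriv sech x) x := by
  rw [deriv_deriv_sech]
  have hsech : HasDerivAt sech (deriv sech x) x := (hasDerivAt_sech x).differentiableAt.hasDerivAt
  refine (hsech.sub ((hsech.pow 3).const_mul 2)).congr_deriv ?_
  ring

/-- `S(φ + xφ') = -φ` pointwise on ℝ (in the notation of the paper, `S(∂_μφ) = J⁻¹∂_θφ`). -/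
theorem S_of_phi_add_xphi' :
    ∀ x : ℝ, Sop (fun y : ℝ => phiC y + (y : ℂ) * deriv phiC y) x = -phiC x := by
  intro x
  have hρ : (fun y : ℝ => phiC y + (y : ℂ) * deriv phiC y)
      = fun y => ((sech y + y * deriv sech y : ℝ) : ℂ) := by
    funext y
    rw [phiC_eq_ofReal_sech, deriv_ofReal_comp]
    push_cast
    rfl
  have hsech : Differentiable ℝ sech := fun y => (hasDerivAt_sech y).differentiableAt
  have hsech' : Differentiable ℝ (deriv sech) :=
    fun y => (hasDerivAt_deriv_sech y).differentiableAt
  rw [hρ, Sop_ofReal_comp, deriv_deriv_add_mul_deriv hsech hsech'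
    (hasDerivAt_deriv_deriv_sech x).differentiableAt, (hasDerivAt_deriv_deriv_sech x).deriv,
    deriv_deriv_sech, phiC_eq_ofReal_sech, ← Complex.ofReal_neg]
  congr 1
  ring
end

section
/- Let φ(x) = sech x. For every σ ∈ ℝ with |σ| < 1 there exists a constant C > 0 such that for all G ∈ H²(ℝ, ℂ): ‖G‖_{H²} ≤ C ( ‖ (1/2)(1-σ²)G + σG' - (1/2)G'' - 2φ²G - φ² conj(G) ‖_{L²} + ‖ e^{-2|x|} G ‖_{L²} ). (The differential operator appearing here is the conjugation e^{σx} S e^{-σx} of the linearized operator S.) -/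
open Real MeasureTheory

/-- The real `L²` pairing `⟨f, g⟩ = Re ∫ f conj(g)`. -/
noncomputable def rip (f g : ℝ → ℂ) : ℝ := (∫ x : ℝ, f x * (starRingEnd ℂ) (g x)).re

/-!
Put `κ = (1 - σ²)/2 > 0` and `VG = φ²(2G + conj G)`, so the operator is
`LG = κG + σG' - ½G'' - VG`. Pairing with `G` in `L²(ℝ, ℂ)`, viewed as a real Hilbert space,
integration by parts kills the drift `σG'` and turns `-½G''` into `½‖G'‖²`:
`κ‖G‖² + ½‖G'‖² ≤ (‖LG‖ + ‖VG‖)‖G‖`. As `|VG| ≤ 3φ²|G| ≤ 12e^{-2|x|}|G|`, this bounds `‖G‖` and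
`‖G'‖` by `‖LG‖ + ‖e^{-2|x|}G‖`, and solving `LG = …` for `G''` then bounds `‖G''‖`.
-/

open scoped InnerProductSpace

section HilbertSpace

variable {H : Type*} [NormedAddCommGroup H] [InnerProductSpace ℝ H]

theorem coercive_of_inner_eq {κ σ : ℝ} {g g₁ g₂ v : H} (h₁ : ⟪g₁, g⟫_ℝ = 0)
    (h₂ : ⟪g₂, g⟫_ℝ = -‖g₁‖ ^ 2) :
    κ * ‖g‖ ^ 2 + ‖g₁‖ ^ 2 / 2 ≤ (‖κ • g + σ • g₁ - (1 / 2 : ℝ) • g₂ - v‖ + ‖v‖) * ‖g‖ := by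
  have hpair : ⟪κ • g + σ • g₁ - (1 / 2 : ℝ) • g₂ - v, g⟫_ℝ + ⟪v, g⟫_ℝ
      = κ * ‖g‖ ^ 2 + ‖g₁‖ ^ 2 / 2 := by
    simp only [inner_sub_left, inner_add_left, real_inner_smul_left, h₁, h₂,
      real_inner_self_eq_norm_sq]
    ring
  rw [← hpair, add_mul]
  exact add_le_add (real_inner_le_norm _ _) (real_inner_le_norm _ _)

theorem norm_add_norm_add_norm_le_of_inner_eq {κ σ ρ : ℝ} (hκ : 0 < κ) (hκ' : κ ≤ 1 / 2)
    (hσ : |σ| ≤ 1) {g g₁ g₂ v : H} (h₁ : ⟪g₁, g⟫_ℝ = 0) (h₂ : ⟪g₂, g⟫_ℝ = -‖g₁‖ ^ 2)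
    (hv : ‖v‖ ≤ 3 * ‖g‖) (hvρ : ‖v‖ ≤ ρ) :
    ‖g‖ + ‖g₁‖ + ‖g₂‖ ≤ 12 / κ * (‖κ • g + σ • g₁ - (1 / 2 : ℝ) • g₂ - v‖ + ρ) := by
  set ℓ := κ • g + σ • g₁ - (1 / 2 : ℝ) • g₂ - v
  set M := ‖ℓ‖ + ρ
  have hρ : 0 ≤ ρ := (norm_nonneg v).trans hvρ
  have hM : 0 ≤ M := by positivity
  have hcoer : κ * ‖g‖ ^ 2 + ‖g₁‖ ^ 2 / 2 ≤ M * ‖g‖ :=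
    (coercive_of_inner_eq h₁ h₂).trans (by gcongr; exact add_le_add_right hvρ _)
  have hg : ‖g‖ ≤ M / κ := by
    rw [le_div_iff₀ hκ]
    nlinarith [norm_nonneg g, sq_nonneg ‖g₁‖]
  have hg₁ : ‖g₁‖ ≤ M / κ := by
    -- `‖g₁‖² ≤ 2M‖g‖ ≤ 2κ(M/κ)² ≤ (M/κ)²`
    refine le_of_pow_le_pow_left₀ two_ne_zero (by positivity) ?_
    have hMg : M * ‖g‖ ≤ M * (M / κ) := by gcongr
    have hMκ : 2 * κ * (M / κ) ^ 2 = 2 * M * (M / κ) := by field_simp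
    nlinarith [sq_nonneg (M / κ)]
  have hg₂ : ‖g₂‖ ≤ 2 * (κ * ‖g‖ + |σ| * ‖g₁‖ + 3 * ‖g‖ + ‖ℓ‖) := by
    have hsolve : g₂ = (2 : ℝ) • (κ • g + σ • g₁ - v - ℓ) := by
      simp only [ℓ]
      module
    rw [hsolve, norm_smul, Real.norm_two]
    gcongr
    calc ‖κ • g + σ • g₁ - v - ℓ‖ ≤ ‖κ • g‖ + ‖σ • g₁‖ + ‖v‖ + ‖ℓ‖ :=
          norm_sub_le_of_le (norm_sub_le_of_le (norm_add_le _ _) le_rfl) le_rfl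
      _ = κ * ‖g‖ + |σ| * ‖g₁‖ + ‖v‖ + ‖ℓ‖ := by
          rw [norm_smul, norm_smul, Real.norm_eq_abs, Real.norm_eq_abs, abs_of_pos hκ]
      _ ≤ κ * ‖g‖ + |σ| * ‖g₁‖ + 3 * ‖g‖ + ‖ℓ‖ := by grw [hv]
  have hM2 : 2 * M ≤ M / κ := by rw [le_div_iff₀ hκ]; nlinarith
  have hσg₁ : |σ| * ‖g₁‖ ≤ ‖g₁‖ := mul_le_of_le_one_left (norm_nonneg _) hσ
  have hκg : κ * ‖g‖ ≤ ‖g‖ / 2 := by nlinarith [norm_nonneg g]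
  have hℓ : ‖ℓ‖ ≤ M := le_add_of_nonneg_right hρ
  have hC : 12 / κ * M = 12 * (M / κ) := by ring
  linarith

end HilbertSpace

section L2

variable {α E F : Type*} [MeasurableSpace α] {μ : Measure α}
  [NormedAddCommGroup E] [InnerProductSpace ℝ E] [NormedAddCommGroup F]

theorem MeasureTheory.MemLp.norm_toLp_eq_sqrt {f : α → F} (hf : MemLp f 2 μ) :
    ‖hf.toLp f‖ = √(∫ x, ‖f x‖ ^ 2 ∂μ) := by
  rw [Lp.norm_toLp, hf.eLpNorm_eq_integral_rpow_norm two_ne_zero ENNReal.ofNat_ne_top,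
    ENNReal.toReal_ofReal (by positivity), Real.sqrt_eq_rpow]
  norm_num

theorem MeasureTheory.MemLp.norm_toLp_le_mul {p : ENNReal} {f g : α → F} {c : ℝ}
    (hf : MemLp f p μ) (hg : MemLp g p μ) (hfg : ∀ x, ‖f x‖ ≤ c * ‖g x‖) :
    ‖hf.toLp f‖ ≤ c * ‖hg.toLp g‖ :=
  Lp.norm_le_mul_norm_of_ae_le_mul <| by
    filter_upwards [hf.coeFn_toLp, hg.coeFn_toLp] with x hfx hgx
    rw [hfx, hgx]
    exact hfg x

theorem sqrt_integral_norm_sq_add_le {f g h : α → F} (hf : MemLp f 2 μ)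
    (hg : MemLp g 2 μ) (hh : MemLp h 2 μ) :
    √(∫ x, ‖f x‖ ^ 2 + ‖g x‖ ^ 2 + ‖h x‖ ^ 2 ∂μ)
      ≤ ‖hf.toLp f‖ + ‖hg.toLp g‖ + ‖hh.toLp h‖ := by
  have hint : ∀ {k : α → F}, MemLp k 2 μ → Integrable (fun x => ‖k x‖ ^ 2) μ :=
    fun hk => (memLp_two_iff_integrable_sq_norm hk.1).1 hk
  have hsq : ∀ {k : α → F} (hk : MemLp k 2 μ), ∫ x, ‖k x‖ ^ 2 ∂μ = ‖hk.toLp k‖ ^ 2 := by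
    intro k hk
    rw [hk.norm_toLp_eq_sqrt, Real.sq_sqrt (integral_nonneg fun x => by positivity)]
  rw [integral_add (f := fun x => ‖f x‖ ^ 2 + ‖g x‖ ^ 2) ((hint hf).add (hint hg)) (hint hh),
    integral_add (hint hf) (hint hg), hsq hf, hsq hg, hsq hh]
  refine Real.sqrt_le_iff.2 ⟨by positivity, ?_⟩
  nlinarith [norm_nonneg (hf.toLp f), norm_nonneg (hg.toLp g), norm_nonneg (hh.toLp h)]

theorem MeasureTheory.MemLp.inner_toLp_ae_eq {f g : α → E} (hf : MemLp f 2 μ) (hg : MemLp g 2 μ) :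
    (fun x => ⟪hf.toLp f x, hg.toLp g x⟫_ℝ) =ᵐ[μ] fun x => ⟪f x, g x⟫_ℝ := by
  filter_upwards [hf.coeFn_toLp, hg.coeFn_toLp] with x hfx hgx
  rw [hfx, hgx]

theorem MeasureTheory.MemLp.integrable_inner {f g : α → E} (hf : MemLp f 2 μ)
    (hg : MemLp g 2 μ) : Integrable (fun x => ⟪f x, g x⟫_ℝ) μ :=
  (L2.integrable_inner (hf.toLp f) (hg.toLp g)).congr (hf.inner_toLp_ae_eq hg)

theorem MeasureTheory.MemLp.inner_toLp {f g : α → E} (hf : MemLp f 2 μ) (hg : MemLp g 2 μ) :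
    ⟪hf.toLp f, hg.toLp g⟫_ℝ = ∫ x, ⟪f x, g x⟫_ℝ ∂μ :=
  integral_congr_ae (hf.inner_toLp_ae_eq hg)

end L2

section IntegrationByParts

variable {E : Type*} [NormedAddCommGroup E] [InnerProductSpace ℝ E] {G G' G'' : ℝ → E}

theorem inner_toLp_deriv_self_eq_zero (hG : MemLp G 2 volume) (hG' : MemLp G' 2 volume)
    (hd : ∀ x, HasDerivAt G (G' x) x) :
    ⟪hG'.toLp G', hG.toLp G⟫_ℝ = 0 := by
  have h := integral_eq_zero_of_hasDerivAt_of_integrable (f' := fun x => 2 * ⟪G' x, G x⟫_ℝ)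
    (fun x => ((hd x).inner ℝ (hd x)).congr_deriv (by rw [real_inner_comm]; ring))
    ((hG'.integrable_inner hG).const_mul 2) (hG.integrable_inner hG)
  rw [integral_const_mul] at h
  rw [hG'.inner_toLp hG]
  linarith

theorem inner_toLp_deriv_deriv_self_eq_neg_norm_sq (hG : MemLp G 2 volume)
    (hG' : MemLp G' 2 volume) (hG'' : MemLp G'' 2 volume)
    (hd : ∀ x, HasDerivAt G (G' x) x) (hd' : ∀ x, HasDerivAt G' (G'' x) x) :
    ⟪hG''.toLp G'', hG.toLp G⟫_ℝ = -‖hG'.toLp G'‖ ^ 2 := by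
  have h := integral_eq_zero_of_hasDerivAt_of_integrable (fun x => (hd' x).inner ℝ (hd x))
    ((hG'.integrable_inner hG').add (hG''.integrable_inner hG)) (hG'.integrable_inner hG)
  rw [integral_add (hG'.integrable_inner hG') (hG''.integrable_inner hG)] at h
  rw [hG''.inner_toLp hG, ← real_inner_self_eq_norm_sq, hG'.inner_toLp hG']
  linarith

end IntegrationByParts

theorem continuous_phiC : Continuous phiC :=
  Complex.continuous_ofReal.comp (continuous_const.div continuous_cosh fun x => (cosh_pos x).ne')

theorem sech_sq_le_four_mul_exp (x : ℝ) : (1 / cosh x) ^ 2 ≤ 4 * exp (-2 * |x|) := by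
  calc (1 / cosh x) ^ 2 ≤ (2 / exp |x|) ^ 2 := by
        refine pow_le_pow_left₀ (by positivity) ?_ 2
        rw [div_le_div_iff₀ (cosh_pos x) (exp_pos _), cosh_eq]
        linarith [exp_abs_le x]
    _ = 4 * exp (-2 * |x|) := by
        rw [div_eq_mul_inv, ← exp_neg, mul_pow, ← exp_nat_mul]
        ring_nf

theorem sech_sq_le_one (x : ℝ) : (1 / cosh x) ^ 2 ≤ 1 :=
  pow_le_one₀ (by positivity) ((div_le_one (cosh_pos x)).2 (one_le_cosh x))

noncomputable def phiPotential (G : ℝ → ℂ) (x : ℝ) : ℂ :=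
  2 * phiC x ^ 2 * G x + phiC x ^ 2 * starRingEnd ℂ (G x)

theorem norm_phiPotential_le (G : ℝ → ℂ) (x : ℝ) :
    ‖phiPotential G x‖ ≤ 3 * (1 / cosh x) ^ 2 * ‖G x‖ := by
  have hφ : ‖phiC x‖ ^ 2 = (1 / cosh x) ^ 2 := by
    rw [phiC, Complex.norm_real, Real.norm_eq_abs, sq_abs]
  calc _ ≤ ‖2 * phiC x ^ 2 * G x‖ + ‖phiC x ^ 2 * starRingEnd ℂ (G x)‖ := norm_add_le _ _
    _ = 3 * (1 / cosh x) ^ 2 * ‖G x‖ := by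
      simp only [norm_mul, norm_pow, RCLike.norm_conj, hφ, Complex.norm_ofNat]
      ring

theorem norm_phiPotential_le_three_mul (G : ℝ → ℂ) (x : ℝ) :
    ‖phiPotential G x‖ ≤ 3 * ‖G x‖ :=
  (norm_phiPotential_le G x).trans (by gcongr; linarith [sech_sq_le_one x])

theorem norm_phiPotential_le_twelve_mul_exp (G : ℝ → ℂ) (x : ℝ) :
    ‖phiPotential G x‖ ≤ 12 * ‖(exp (-2 * |x|) : ℂ) * G x‖ := by
  rw [norm_mul, Complex.norm_real, norm_of_nonneg (exp_pos _).le, ← mul_assoc,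
    show (12 : ℝ) = 3 * 4 by norm_num, mul_assoc 3]
  exact (norm_phiPotential_le G x).trans (by gcongr; exact sech_sq_le_four_mul_exp x)

theorem memLp_phiPotential {G : ℝ → ℂ} (hG : MemLp G 2 volume) :
    MemLp (phiPotential G) 2 volume :=
  hG.of_le_mul (((continuous_const.mul (continuous_phiC.pow 2)).aestronglyMeasurable.mul hG.1).add
      ((continuous_phiC.pow 2).aestronglyMeasurable.mul
        (Complex.continuous_conj.comp_aestronglyMeasurable hG.1)))
    (ae_of_all _ (norm_phiPotential_le_three_mul G))

theorem memLp_exp_mul {G : ℝ → ℂ} (hG : MemLp G 2 volume) :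
    MemLp (fun x => (exp (-2 * |x|) : ℂ) * G x) 2 volume := by
  have hw : Continuous fun x : ℝ => (exp (-2 * |x|) : ℂ) := by fun_prop
  refine hG.of_le (hw.aestronglyMeasurable.mul hG.1) (ae_of_all _ fun x => ?_)
  rw [norm_mul, Complex.norm_real, norm_of_nonneg (exp_pos _).le]
  exact mul_le_of_le_one_left (norm_nonneg _) (exp_le_one_iff.2 (by linarith [abs_nonneg x]))

theorem sqrt_integral_norm_sq_eq_norm_toLp {κ σ : ℝ} {G G' G'' : ℝ → ℂ}
    (hG : MemLp G 2 volume) (hG' : MemLp G' 2 volume) (hG'' : MemLp G'' 2 volume) :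
    √(∫ x, ‖(κ : ℂ) * G x + σ * G' x - 1 / 2 * G'' x - 2 * phiC x ^ 2 * G x
        - phiC x ^ 2 * starRingEnd ℂ (G x)‖ ^ 2)
      = ‖κ • hG.toLp G + σ • hG'.toLp G' - (1 / 2 : ℝ) • hG''.toLp G''
          - (memLp_phiPotential hG).toLp (phiPotential G)‖ := by
  rw [← MemLp.toLp_const_smul, ← MemLp.toLp_const_smul, ← MemLp.toLp_const_smul,
    ← MemLp.toLp_add, ← MemLp.toLp_sub, ← MemLp.toLp_sub, MemLp.norm_toLp_eq_sqrt]
  refine congrArg (fun f : ℝ → ℂ => √(∫ x, ‖f x‖ ^ 2)) (funext fun x => ?_)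
  simp only [Pi.sub_apply, Pi.add_apply, Pi.smul_apply, Complex.real_smul, one_div,
    Complex.ofReal_inv, Complex.ofReal_ofNat, phiPotential]
  ring

/-- Elliptic estimate for the conjugated operator `e^{σx} S e^{-σx}` for `|σ| < 1`:
`‖G‖_{H²} ≲ ‖e^{σx}Se^{-σx}G‖_{L²} + ‖e^{-2|x|}G‖_{L²}`. -/
theorem conjugated_S_elliptic_estimate (σ : ℝ) (hσ : |σ| < 1) :
    ∃ C : ℝ, 0 < C ∧
      ∀ G : ℝ → ℂ,
        Differentiable ℝ G → Differentiable ℝ (deriv G) →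
        MemLp G 2 volume → MemLp (deriv G) 2 volume →
        MemLp (deriv (deriv G)) 2 volume →
        Real.sqrt (∫ x : ℝ, ‖G x‖ ^ 2 + ‖deriv G x‖ ^ 2 + ‖deriv (deriv G) x‖ ^ 2)
          ≤ C * (Real.sqrt (∫ x : ℝ,
                ‖(((1 / 2) * (1 - σ ^ 2) : ℝ) : ℂ) * G x + (σ : ℂ) * deriv G x
                  - (1 / 2) * deriv (deriv G) x - 2 * (phiC x) ^ 2 * G x
                  - (phiC x) ^ 2 * (starRingEnd ℂ) (G x)‖ ^ 2)
              + Real.sqrt (∫ x : ℝ, ‖Real.exp (-2 * |x|) * G x‖ ^ 2)) := by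
  set κ : ℝ := (1 / 2) * (1 - σ ^ 2)
  have hσ2 : σ ^ 2 < 1 := by rwa [sq_lt_one_iff_abs_lt_one]
  have hκ : 0 < κ := by simp only [κ]; linarith
  have hκ' : κ ≤ 1 / 2 := by simp only [κ]; nlinarith [sq_nonneg σ]
  refine ⟨144 / κ, by positivity, fun G hG hG' hGm hG'm hG''m => ?_⟩
  have hVm := memLp_phiPotential hGm
  have hWm := memLp_exp_mul hGm
  rw [sqrt_integral_norm_sq_eq_norm_toLp hGm hG'm hG''m, ← hWm.norm_toLp_eq_sqrt]
  have hd : ∀ x, HasDerivAt G (deriv G x) x := fun x => (hG x).hasDerivAt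
  have hd' : ∀ x, HasDerivAt (deriv G) (deriv (deriv G) x) x := fun x => (hG' x).hasDerivAt
  calc _ ≤ _ := sqrt_integral_norm_sq_add_le hGm hG'm hG''m
    _ ≤ 12 / κ * (_ + 12 * _) :=
        norm_add_norm_add_norm_le_of_inner_eq hκ hκ' hσ.le
          (inner_toLp_deriv_self_eq_zero hGm hG'm hd)
          (inner_toLp_deriv_deriv_self_eq_neg_norm_sq hGm hG'm hG''m hd hd')
          (hVm.norm_toLp_le_mul hGm (norm_phiPotential_le_three_mul G))
          (hVm.norm_toLp_le_mul hWm (norm_phiPotential_le_twelve_mul_exp G))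
    _ ≤ 144 / κ * (_ + _) := by
        rw [show (144 : ℝ) / κ = 12 / κ * 12 by ring, mul_assoc, mul_add 12]
        gcongr
        exact le_mul_of_one_le_left (norm_nonneg _) (by norm_num)
end

section
/- Let φ(x) = sech x. Then the leading-order tail-interaction integrals between two solitons at separation 2a satisfy: lim_{a → ∞} e^{2a} ∫_ℝ φ³(x-a) φ(x+a) dx = 4, and lim_{a → ∞} e^{2a} ∫_ℝ (φ³)'(x-a) φ(x+a) dx = 4, where (φ³)' denotes the derivative of x ↦ φ(x)³. (These are the values α(0,a) ≈ 4e^{-2a} and β(0,a) ≈ 4e^{-2a} of the interaction integrals computed in the paper's appendix.) -/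
/-!
Substituting `x = y + a` and multiplying by `e^{2a}` turns the integral of `f(x - a) φ(x + a)`
into `∫ f(y) e^{2a} φ(y + 2a) dy`, and `e^{2a} φ(y + 2a) = 2 / (e^y + e^{-y-4a})` increases to
`2e^{-y}`; dominated convergence gives the limit `2 ∫ f(y) e^{-y} dy`. For `f = φ³` the integrand
`φ³(y) e^{-y} = 8e^{2y}/(e^{2y}+1)³` has the antiderivative `-2/(e^{2y}+1)²`, so the integral is `2`;
for `f = (φ³)'` an integration by parts reduces to the case `f = φ³`.
-/

open Real Filter MeasureTheory Topology

namespace TailInteraction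

noncomputable def sech (y : ℝ) : ℝ := 1 / cosh y

lemma sech_pos (y : ℝ) : 0 < sech y := one_div_pos.mpr (cosh_pos y)

lemma continuous_sech : Continuous sech :=
  continuous_const.div continuous_cosh fun y => (cosh_pos y).ne'

lemma exp_le_two_mul_cosh (y : ℝ) : exp y ≤ 2 * cosh y := by
  rw [cosh_eq]; linarith [exp_pos (-y)]

lemma sech_le_two_mul_exp_neg (y : ℝ) : sech y ≤ 2 * exp (-y) := by
  rw [sech, div_le_iff₀ (cosh_pos y)]
  calc 1 = exp (-y) * exp y := by rw [← exp_add, neg_add_cancel, exp_zero]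
    _ ≤ exp (-y) * (2 * cosh y) := by gcongr; exact exp_le_two_mul_cosh y
    _ = 2 * exp (-y) * cosh y := by ring

lemma sech_le_two_mul_exp (y : ℝ) : sech y ≤ 2 * exp y := by
  simpa [sech] using sech_le_two_mul_exp_neg (-y)

lemma sech_le_one (y : ℝ) : sech y ≤ 1 := by
  rw [sech, div_le_one (cosh_pos y)]; exact one_le_cosh y

lemma integrable_sech : Integrable sech := by
  have hmeas := continuous_sech.aestronglyMeasurable (μ := volume)
  rw [← integrableOn_univ, ← Set.Iic_union_Ioi (a := 0)]
  refine IntegrableOn.union ?_ ?_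
  · refine ((integrableOn_exp_Iic 0).const_mul 2).mono' hmeas.restrict (ae_of_all _ fun y => ?_)
    rw [norm_of_nonneg (sech_pos y).le]
    exact sech_le_two_mul_exp y
  · refine ((exp_neg_integrableOn_Ioi 0 one_pos).const_mul 2).mono' hmeas.restrict
      (ae_of_all _ fun y => ?_)
    rw [norm_of_nonneg (sech_pos y).le]
    simpa using sech_le_two_mul_exp_neg y

lemma integrable_mul_exp_neg_of_abs_le {f : ℝ → ℝ} (hf : AEStronglyMeasurable f) {C : ℝ}
    (hC : ∀ y, |f y| ≤ C * sech y ^ 2) : Integrable fun y => f y * exp (-y) := by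
  refine (integrable_sech.const_mul (2 * C)).mono'
    (hf.mul (continuous_exp.comp continuous_neg).aestronglyMeasurable) (ae_of_all _ fun y => ?_)
  have hC₀ : 0 ≤ C :=
    nonneg_of_mul_nonneg_left ((abs_nonneg _).trans (hC y)) (pow_pos (sech_pos y) 2)
  have hsech : sech y * exp (-y) ≤ 2 := by
    have := mul_le_mul_of_nonneg_right (sech_le_two_mul_exp y) (exp_pos (-y)).le
    rwa [mul_assoc, ← exp_add, add_neg_cancel, exp_zero, mul_one] at this
  rw [norm_mul, norm_eq_abs, norm_of_nonneg (exp_pos _).le]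
  calc |f y| * exp (-y) ≤ C * sech y ^ 2 * exp (-y) := by gcongr; exact hC y
    _ = C * sech y * (sech y * exp (-y)) := by ring
    _ ≤ C * sech y * 2 := by gcongr; exact mul_nonneg hC₀ (sech_pos y).le
    _ = 2 * C * sech y := by ring

lemma exp_two_mul_mul_sech_add_eq (a y : ℝ) :
    exp (2 * a) * sech (y + 2 * a) = 2 / (exp y + exp (-(y + 4 * a))) := by
  have h₁ : exp (y + 2 * a) = exp y * exp (2 * a) := exp_add _ _
  have h₂ : exp (-(y + 4 * a)) = exp (-(y + 2 * a)) / exp (2 * a) := by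
    rw [← exp_sub]; ring_nf
  rw [sech, cosh_eq, h₁, h₂]
  have := exp_pos (2 * a)
  field_simp

lemma exp_two_mul_mul_sech_add_le (a y : ℝ) : exp (2 * a) * sech (y + 2 * a) ≤ 2 * exp (-y) :=
  calc exp (2 * a) * sech (y + 2 * a) ≤ exp (2 * a) * (2 * exp (-(y + 2 * a))) := by
        gcongr; exact sech_le_two_mul_exp_neg _
    _ = 2 * exp (-y) := by rw [mul_left_comm, ← exp_add]; ring_nf

lemma tendsto_exp_two_mul_mul_sech_add (y : ℝ) :
    Tendsto (fun a => exp (2 * a) * sech (y + 2 * a)) atTop (𝓝 (2 * exp (-y))) := by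
  have hlim : Tendsto (fun a : ℝ => -(y + 4 * a)) atTop atBot :=
    tendsto_neg_atTop_atBot.comp (tendsto_atTop_add_const_left _ y
      (tendsto_id.const_mul_atTop four_pos))
  have h := (tendsto_const_nhds (x := (2 : ℝ))).div
    (tendsto_const_nhds.add (tendsto_exp_atBot.comp hlim)) (by rw [add_zero]; exact (exp_pos y).ne')
  simp only [exp_two_mul_mul_sech_add_eq]
  rw [add_zero] at h
  rw [exp_neg, ← div_eq_mul_inv]
  exact h

theorem tendsto_exp_two_mul_mul_integral_mul_sech {f : ℝ → ℝ}
    (hf : Integrable fun y => f y * exp (-y)) :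
    Tendsto (fun a => exp (2 * a) * ∫ x, f (x - a) * sech (x + a)) atTop
      (𝓝 (2 * ∫ y, f y * exp (-y))) := by
  have hshift (a : ℝ) : exp (2 * a) * ∫ x, f (x - a) * sech (x + a)
      = ∫ y, f y * (exp (2 * a) * sech (y + 2 * a)) := by
    rw [← integral_sub_right_eq_self (fun y => f y * (exp (2 * a) * sech (y + 2 * a))) a,
      ← integral_const_mul]
    congr 1 with x
    rw [show x - a + 2 * a = x + a by ring]; ring
  have hmeas : AEStronglyMeasurable f :=
    (hf.aestronglyMeasurable.mul continuous_exp.aestronglyMeasurable).congr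
      (ae_of_all _ fun y => by simp [mul_assoc, ← exp_add])
  simp only [hshift, ← integral_const_mul, mul_left_comm (2 : ℝ)]
  refine tendsto_integral_filter_of_dominated_convergence (fun y => ‖f y * exp (-y)‖ * 2)
    (Eventually.of_forall fun a => hmeas.mul (continuous_const.mul
      (continuous_sech.comp (continuous_add_const _))).aestronglyMeasurable)
    (Eventually.of_forall fun a => ae_of_all _ fun y => ?_) (hf.norm.mul_const 2)
    (ae_of_all _ fun y => tendsto_const_nhds.mul (tendsto_exp_two_mul_mul_sech_add y))
  have hk := exp_two_mul_mul_sech_add_le a y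
  have hk₀ : 0 ≤ exp (2 * a) * sech (y + 2 * a) := (mul_pos (exp_pos _) (sech_pos _)).le
  rw [norm_mul (f y), norm_of_nonneg hk₀, norm_mul, norm_of_nonneg (exp_pos _).le, mul_assoc]
  exact mul_le_mul_of_nonneg_left (by linarith) (norm_nonneg _)

lemma hasDerivAt_sech_pow_three (y : ℝ) :
    HasDerivAt (fun y => sech y ^ 3) (-3 * sinh y / cosh y ^ 4) y := by
  have h := ((hasDerivAt_cosh y).inv (cosh_pos y).ne').pow 3
  simp only [sech, one_div]
  refine h.congr_deriv ?_
  simp only [Pi.inv_apply, inv_pow]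
  have := (cosh_pos y).ne'
  field_simp
  ring

lemma abs_sinh_div_cosh_pow_four_le (y : ℝ) : |sinh y / cosh y ^ 4| ≤ sech y ^ 2 := by
  have hc := cosh_pos y
  have hs : |sinh y| ≤ cosh y := by rw [abs_sinh, ← cosh_abs]; exact (sinh_lt_cosh _).le
  rw [abs_div, abs_of_pos (pow_pos hc 4), sech, div_pow, one_pow,
    div_le_div_iff₀ (pow_pos hc 4) (pow_pos hc 2), one_mul]
  calc |sinh y| * cosh y ^ 2 ≤ cosh y * cosh y ^ 2 := by gcongr
    _ ≤ cosh y * cosh y ^ 2 * cosh y := le_mul_of_one_le_right (by positivity) (one_le_cosh y)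
    _ = cosh y ^ 4 := by ring

lemma integrable_sech_pow_three_mul_exp_neg : Integrable fun y => sech y ^ 3 * exp (-y) :=
  integrable_mul_exp_neg_of_abs_le (continuous_sech.pow 3).aestronglyMeasurable (C := 1)
    fun y => by
      rw [abs_of_pos (pow_pos (sech_pos y) 3), one_mul, pow_succ]
      exact mul_le_of_le_one_right (pow_pos (sech_pos y) 2).le (sech_le_one y)

lemma integrable_deriv_sech_pow_three_mul_exp_neg :
    Integrable fun y => -3 * sinh y / cosh y ^ 4 * exp (-y) := by
  refine integrable_mul_exp_neg_of_abs_le (C := 3)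
    ((continuous_const.mul continuous_sinh).div (continuous_cosh.pow 4)
      fun y => (pow_pos (cosh_pos y) 4).ne').aestronglyMeasurable fun y => ?_
  rw [mul_div_assoc, abs_mul]
  norm_num
  exact abs_sinh_div_cosh_pow_four_le y

lemma hasDerivAt_antideriv_sech_pow_three_mul_exp_neg (y : ℝ) :
    HasDerivAt (fun y => -2 * ((exp (2 * y) + 1) ^ 2)⁻¹) (sech y ^ 3 * exp (-y)) y := by
  have h := ((((hasDerivAt_id y).const_mul 2).exp.add_const 1).pow 2).inv
    (by positivity : (exp (2 * y) + 1) ^ 2 ≠ 0) |>.const_mul (-2)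
  refine h.congr_deriv ?_
  simp only [Pi.pow_apply, id, sech, cosh_eq, exp_neg, show 2 * y = y + y by ring, exp_add]
  have := exp_pos y
  field_simp
  ring

lemma integral_sech_pow_three_mul_exp_neg : ∫ y, sech y ^ 3 * exp (-y) = 2 := by
  have hbot : Tendsto (fun y : ℝ => -2 * ((exp (2 * y) + 1) ^ 2)⁻¹) atBot (𝓝 (-2)) := by
    have h := (tendsto_exp_atBot.comp (tendsto_id.const_mul_atBot two_pos)).add_const (1 : ℝ)
    simpa using (h.pow 2).inv₀ (by norm_num) |>.const_mul (-2 : ℝ)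
  have htop : Tendsto (fun y : ℝ => -2 * ((exp (2 * y) + 1) ^ 2)⁻¹) atTop (𝓝 0) := by
    have h := (tendsto_exp_atTop.comp (tendsto_id.const_mul_atTop two_pos)).atTop_add
      (tendsto_const_nhds (x := (1 : ℝ)))
    simpa using ((h.atTop_mul_atTop₀ h).inv_tendsto_atTop.const_mul (-2 : ℝ)).congr
      fun y => by simp [sq]
  rw [integral_of_hasDerivAt_of_tendsto hasDerivAt_antideriv_sech_pow_three_mul_exp_neg
    integrable_sech_pow_three_mul_exp_neg hbot htop]
  norm_num

lemma integral_deriv_sech_pow_three_mul_exp_neg :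
    ∫ y, -3 * sinh y / cosh y ^ 4 * exp (-y) = 2 := by
  have hparts := integral_mul_deriv_eq_deriv_mul_of_integrable
    (fun y _ => hasDerivAt_sech_pow_three y) (fun y _ => (hasDerivAt_neg y).exp)
    (integrable_sech_pow_three_mul_exp_neg.neg.congr (ae_of_all _ fun y => by simp))
    integrable_deriv_sech_pow_three_mul_exp_neg integrable_sech_pow_three_mul_exp_neg
  simp only [mul_neg, mul_one, integral_neg, neg_inj] at hparts
  rw [← hparts, integral_sech_pow_three_mul_exp_neg]

end TailInteraction

open TailInteraction

/-- Leading-order soliton tail-interaction integrals: with `φ = sech`,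
`∫ φ³(x-a)φ(x+a) dx = 4e^{-2a}(1 + o(1))` and `∫ (φ³)'(x-a)φ(x+a) dx = 4e^{-2a}(1 + o(1))`
as `a → ∞`. -/
theorem tail_interaction_integrals :
    Tendsto (fun a : ℝ => Real.exp (2 * a) *
        ∫ x : ℝ, (1 / Real.cosh (x - a)) ^ 3 * (1 / Real.cosh (x + a))) atTop (nhds 4)
    ∧ Tendsto (fun a : ℝ => Real.exp (2 * a) *
        ∫ x : ℝ, deriv (fun y : ℝ => (1 / Real.cosh y) ^ 3) (x - a) * (1 / Real.cosh (x + a)))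
        atTop (nhds 4) := by
  have hderiv : deriv (fun y : ℝ => (1 / cosh y) ^ 3) = fun y => -3 * sinh y / cosh y ^ 4 :=
    funext fun y => (hasDerivAt_sech_pow_three y).deriv
  have h₁ := tendsto_exp_two_mul_mul_integral_mul_sech integrable_sech_pow_three_mul_exp_neg
  have h₂ := tendsto_exp_two_mul_mul_integral_mul_sech integrable_deriv_sech_pow_three_mul_exp_neg
  rw [integral_sech_pow_three_mul_exp_neg, two_mul, two_add_two_eq_four] at h₁
  rw [integral_deriv_sech_pow_three_mul_exp_neg, two_mul, two_add_two_eq_four] at h₂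
  rw [hderiv]
  exact ⟨h₁, h₂⟩
end
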